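/- arXiv:1405.5869 — 2 statements merged into one kernel-verified Lean document; each statement's English description precedes it below -/
import Mathlib

section
/- For any vector x in R^D with ||x||_2 ≤ U < 1 and query q in R^D with ||q||_2 = 1, defining P(x) = [x; ||x||_2^2; ||x||_2^4; ...; ||x||_2^{2^m}] and Q(q) = [q; 1/2; 1/2; ...; 1/2] (appending m entries each), we have ||Q(q) - P(x)||_2^2 = (1 + m/4) - 2 q^T x + ||x||_2^{2^{m+1}}. -/
/-!
`Q(q) - P(x)` is `q - x` followed by the entries `1/2 - t ^ 2 ^ (j + 1)` with `t = ‖x‖`.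
Since `(1/2 - s) ^ 2 = 1/4 + (s ^ 2 - s)`, the squares of these entries telescope to
`m/4 - t ^ 2 + t ^ 2 ^ (m + 1)`, and the `- t ^ 2` cancels the `‖x‖ ^ 2` in
`‖q - x‖ ^ 2 = 1 - 2 ⟪q, x⟫ + ‖x‖ ^ 2`.
-/

noncomputable def alshP (D m : ℕ) (x : EuclideanSpace ℝ (Fin D)) :
    EuclideanSpace ℝ (Fin (D + m)) :=
  WithLp.toLp 2 (fun i => (Fin.addCases (fun j => x j) (fun j => ‖x‖ ^ (2 ^ (j.val + 1))) i : ℝ))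

noncomputable def alshQ (D m : ℕ) (q : EuclideanSpace ℝ (Fin D)) :
    EuclideanSpace ℝ (Fin (D + m)) :=
  WithLp.toLp 2 (fun i => (Fin.addCases (fun j => q j) (fun _ => 1 / 2) i : ℝ))

open Finset

theorem EuclideanSpace.norm_sq_toLp_append {𝕜 : Type*} [RCLike 𝕜] {n k : ℕ}
    (f : Fin n → 𝕜) (g : Fin k → 𝕜) :
    ‖WithLp.toLp 2 (Fin.append f g)‖ ^ 2 = ‖WithLp.toLp 2 f‖ ^ 2 + ‖WithLp.toLp 2 g‖ ^ 2 := by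
  simp only [EuclideanSpace.norm_sq_eq, Fin.sum_univ_add, Fin.append_left, Fin.append_right]

theorem EuclideanSpace.real_inner_eq_sum {ι : Type*} [Fintype ι] (x y : EuclideanSpace ℝ ι) :
    inner ℝ x y = ∑ i, x i * y i := by
  simp [EuclideanSpace.inner_eq_star_dotProduct, dotProduct, mul_comm]

theorem sum_sq_half_sub_pow_two_pow (t : ℝ) (m : ℕ) :
    ∑ j : Fin m, (1 / 2 - t ^ 2 ^ (j.val + 1)) ^ 2 = m / 4 - t ^ 2 + t ^ 2 ^ (m + 1) := by
  have hstep (j : ℕ) :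
      (1 / 2 - t ^ 2 ^ (j + 1)) ^ 2 = 1 / 4 + (t ^ 2 ^ (j + 1 + 1) - t ^ 2 ^ (j + 1)) := by
    rw [pow_succ 2 (j + 1), pow_mul]
    ring
  rw [Fin.sum_univ_eq_sum_range (fun j => (1 / 2 - t ^ 2 ^ (j + 1)) ^ 2)]
  simp only [hstep, sum_add_distrib, sum_range_sub (fun j => t ^ 2 ^ (j + 1)), sum_const,
    card_range, nsmul_eq_mul]
  ring

theorem alshQ_sub_alshP (D m : ℕ) (x q : EuclideanSpace ℝ (Fin D)) :
    alshQ D m q - alshP D m x =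
      WithLp.toLp 2
        (Fin.append (WithLp.ofLp (q - x)) fun j : Fin m => 1 / 2 - ‖x‖ ^ 2 ^ (j.val + 1)) := by
  ext i
  refine Fin.addCases (fun j => ?_) (fun j => ?_) i <;> simp [alshP, alshQ]

theorem alsh_key_equality_general (D m : ℕ)
    (x q : EuclideanSpace ℝ (Fin D)) (hq : ‖q‖ = 1) :
    ‖alshQ D m q - alshP D m x‖ ^ 2 =
      (1 + (m : ℝ) / 4) - 2 * (∑ i, q i * x i) + ‖x‖ ^ (2 ^ (m + 1)) := by
  rw [alshQ_sub_alshP, EuclideanSpace.norm_sq_toLp_append, WithLp.toLp_ofLp, norm_sub_sq_real,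
    hq, EuclideanSpace.real_norm_sq_eq (WithLp.toLp 2 fun j : Fin m => _),
    sum_sq_half_sub_pow_two_pow, EuclideanSpace.real_inner_eq_sum]
  ring

theorem alsh_key_equality (D m : ℕ) (hm : 1 ≤ m) (U : ℝ)
    (x q : EuclideanSpace ℝ (Fin D)) (hx : ‖x‖ ≤ U) (hU : U < 1) (hq : ‖q‖ = 1) :
    ‖alshQ D m q - alshP D m x‖ ^ 2 =
      (1 + (m : ℝ) / 4) - 2 * (∑ i, q i * x i) + ‖x‖ ^ (2 ^ (m + 1)) :=
  alsh_key_equality_general D m x q hq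
end

section
/- There is no locality-sensitive hash family for the similarity Sim(x,y) = x^T y over all of R^D (D ≥ 1): for any S_0 > 0, any 0 < c < 1, and any family H of functions and any p_1 > p_2, it cannot hold that Pr[h(x)=h(y)] ≥ p_1 whenever x^T y ≥ S_0 and Pr[h(x)=h(y)] ≤ p_2 whenever x^T y ≤ c S_0, since there exist x, y ∈ R^D with x^T x ≤ c S_0 < S_0 ≤ x^T y, so the conditions would force 1 = Pr[h(x)=h(x)] ≤ p_2 < p_1 ≤ 1, which is impossible. -/
theorem no_lsh_for_mips (D : ℕ) (hD : 1 ≤ D) (S₀ c : ℝ) (hS₀ : 0 < S₀)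
    (hc0 : 0 < c) (hc1 : c < 1)
    (Ω : Type*) [MeasurableSpace Ω] (μ : MeasureTheory.Measure Ω)
    [MeasureTheory.IsProbabilityMeasure μ]
    (I : Type*) (H : Ω → EuclideanSpace ℝ (Fin D) → I)
    (p₁ p₂ : ENNReal) (hp : p₂ < p₁)
    (h₁ : ∀ x y : EuclideanSpace ℝ (Fin D),
      S₀ ≤ ∑ i, x i * y i → p₁ ≤ μ {ω | H ω x = H ω y})
    (h₂ : ∀ x y : EuclideanSpace ℝ (Fin D),
      (∑ i, x i * y i) ≤ c * S₀ → μ {ω | H ω x = H ω y} ≤ p₂) :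
    False := by
  have hDpos : (0:ℝ) < D := by exact_mod_cast Nat.lt_of_lt_of_le Nat.zero_lt_one hD
  set a : ℝ := Real.sqrt (c * S₀ / D) with ha
  have hapos : 0 < a := Real.sqrt_pos.mpr (by positivity)
  have ha2 : a * a = c * S₀ / D := Real.mul_self_sqrt (by positivity)
  set b : ℝ := S₀ / (D * a) with hb
  set x : EuclideanSpace ℝ (Fin D) := WithLp.toLp 2 (fun _ => a) with hx
  set y : EuclideanSpace ℝ (Fin D) := WithLp.toLp 2 (fun _ => b) with hy
  have hsum : ∀ t : ℝ, (∑ _i : Fin D, t) = D * t := by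
    intro t
    simp [Finset.sum_const, Finset.card_univ, nsmul_eq_mul]
  have hxx : (∑ i, x i * x i) = c * S₀ := by
    rw [hsum (a * a), ha2]; field_simp
  have hxy : (∑ i, x i * y i) = S₀ := by
    rw [hsum (a * b), hb]; field_simp
  have k1 : p₁ ≤ μ {ω | H ω x = H ω y} := h₁ x y (le_of_eq hxy.symm)
  have k2 : μ {ω | H ω x = H ω x} ≤ p₂ := h₂ x x (le_of_eq hxx)
  have huniv : {ω | H ω x = H ω x} = Set.univ := by ext ω; simp
  rw [huniv, MeasureTheory.measure_univ] at k2
  have : p₁ ≤ p₂ := k1.trans ((MeasureTheory.prob_le_one).trans k2)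
  exact absurd hp (not_lt.mpr this)
end
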